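/- For a continuous function f on [0,1], let ω_f(ε) = sup{|f(t)−f(s)| : s,t ∈ [0,1], |s−t| < ε} denote its modulus of continuity. Let α, β ∈ (0,∞) with β/2 > α. For any r ≥ 0 there exists c ∈ (0,∞), independent of Δ and δ, such that for all δ ∈ (0,1] and all Δ > 0, P(ω_{S̃}(Δ^β) ≥ Δ^α/2) ≤ c·Δ^r, where S is a simple symmetric random walk. -/

import Mathlib

/-!
Fix a large `q`. By Hoeffding, `P(|S (i + n) - S i| ≥ x) ≤ 2 exp (-x² / 2n) ≤ C_q n^q / x^(2q)`.
In walk time, `[0, 1]` is `N ≈ δ⁻²` steps and a window of length `h` is `m = h / δ²` steps;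
take `2 ^ P ≈ m`. If every increment over a dyadic block of `2 ^ p` steps, `p ≤ P`, is below
`(A / δ) (3/4)^(P - p)`, dyadic chaining bounds all increments over `≤ 2 ^ P` steps by `8 A / δ`,
so the modulus of the rescaled path is at most `8 A`. The union bound over the `N / 2 ^ p`
blocks of each level is a geometric series dominated by the top level,
`N (2 ^ P)^q (δ / A)^(2q + 2) ≲ h^q / A^(2q + 2)`, in which `δ` cancels; with `h = Δ^β` and
`A ≈ Δ^α` this is `Δ^(qβ - 2(q + 1)α) ≤ Δ^r` for `q` large. When `δ > 2 Δ^(β - α)` the window is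
too short for this, but then the interpolated path, being `1`-Lipschitz, has modulus
`≤ Δ^β / δ < Δ^α / 2`.
-/

open MeasureTheory ProbabilityTheory Filter Set
open scoped ENNReal NNReal

noncomputable section

namespace DyDWPaper

/-- Linear interpolation of a discrete-time path at real times `t ≥ 0`. -/
def interp (w : ℕ → ℤ) (t : ℝ) : ℝ :=
  ((⌊t⌋₊ + 1 : ℝ) - t) * (w ⌊t⌋₊ : ℝ) + (t - (⌊t⌋₊ : ℝ)) * (w (⌊t⌋₊ + 1) : ℝ)

/-- Diffusive rescaling `π̃(t) = δ·π(t/δ²)`. -/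
def rescale (δ : ℝ) (f : ℝ → ℝ) : ℝ → ℝ := fun t => δ * f (t / δ ^ 2)

/-- The event `O = {π : π(t) > −1 on [0,1] and π(1) > 1}`. -/
def OEvent (f : ℝ → ℝ) : Prop := (∀ t ∈ Set.Icc (0 : ℝ) 1, f t > -1) ∧ f 1 > 1

/-- The `r`-neighbourhood `O + r` of `O` in sup norm on `C([0,1])`. -/
def OPlus (r : ℝ) : Set (ℝ → ℝ) :=
  {f | ∃ g : ℝ → ℝ, ContinuousOn g (Set.Icc (0 : ℝ) 1) ∧ OEvent g ∧
    ∀ t ∈ Set.Icc (0 : ℝ) 1, |f t - g t| ≤ r}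

/-- A model of the dynamical discrete web: i.i.d. (over even sites of `ℤ²`) arrow
processes, each one a stationary right-continuous `{±1}`-valued Markov jump process
in the dynamical time `τ`, switching at rate `1/2` (uniform resampling at rate 1). -/
structure Model (Ω : Type) [MeasurableSpace Ω] where
  P : Measure Ω
  prob : IsProbabilityMeasure P
  ξ : ℤ × ℤ → ℝ → Ω → ℤ
  vals : ∀ z τ ω, 0 ≤ τ → Even (z.1 + z.2) → ξ z τ ω = 1 ∨ ξ z τ ω = -1
  meas : ∀ z τ, Measurable (ξ z τ)
  rightCont : ∀ ω z τ, 0 ≤ τ → Even (z.1 + z.2) →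
    ∃ ε > 0, ∀ τ', τ ≤ τ' → τ' < τ + ε → ξ z τ' ω = ξ z τ ω
  fdd : ∀ z, Even (z.1 + z.2) → ∀ (n : ℕ) (τ : Fin (n + 1) → ℝ),
    0 ≤ τ 0 → StrictMono τ → ∀ e : Fin (n + 1) → ℤ, (∀ i, e i = 1 ∨ e i = -1) →
    (P {ω | ∀ i, ξ z (τ i) ω = e i}).toReal =
      (1 / 2) * ∏ i : Fin n,
        (if e i.succ = e i.castSucc
          then (1 + Real.exp (-(τ i.succ - τ i.castSucc))) / 2
          else (1 - Real.exp (-(τ i.succ - τ i.castSucc))) / 2)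
  indep : iIndepFun
    (fun (z : {z : ℤ × ℤ // Even (z.1 + z.2)}) ω => fun τ : ℝ => ξ z.1 τ ω) P

variable {Ω Ω' : Type} [MeasurableSpace Ω] [MeasurableSpace Ω']

/-- The discrete random walk started from `(x,s) ∈ ℤ²_even` following the arrows at
dynamical time `τ`; `walk ω τ x s n` is its position at (absolute) time `s + n`. -/
def Model.walk (M : Model Ω) (ω : Ω) (τ : ℝ) (x s : ℤ) : ℕ → ℤ
  | 0 => x
  | n + 1 => M.walk ω τ x s n + M.ξ (M.walk ω τ x s n, s + (n : ℤ)) τ ω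

/-- The walk from `(x,s)` as a real-time path (linear interpolation), evaluated at
absolute time `t ≥ s`. -/
def Model.path (M : Model Ω) (ω : Ω) (τ : ℝ) (x s : ℤ) (t : ℝ) : ℝ :=
  interp (fun n => M.walk ω τ x s n) (t - (s : ℝ))

/-- The path `S₀^τ` from the origin, interpolated to real times. -/
def Model.S0 (M : Model Ω) (τ : ℝ) (ω : Ω) : ℝ → ℝ :=
  fun t => interp (fun n => M.walk ω τ 0 0 n) t

/-- A simple symmetric random walk: i.i.d. uniform `{±1}` increments `X n`. -/
structure RW (Ω : Type) [MeasurableSpace Ω] where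
  P : Measure Ω
  prob : IsProbabilityMeasure P
  X : ℕ → Ω → ℤ
  vals : ∀ n ω, X n ω = 1 ∨ X n ω = -1
  meas : ∀ n, Measurable (X n)
  indep : iIndepFun X P
  fair : ∀ n, P {ω | X n ω = 1} = 1 / 2

def RW.S (R : RW Ω) (n : ℕ) (ω : Ω) : ℤ := ∑ i ∈ Finset.range n, R.X i ω

def RW.path (R : RW Ω) (ω : Ω) : ℝ → ℝ := interp fun n => R.S n ω

/-- The static discrete web with parameter `p`: i.i.d. arrows over even sites,
right with probability `p`. -/
structure StaticModel (Ω : Type) [MeasurableSpace Ω] (p : ℝ) where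
  P : MeasureTheory.Measure Ω
  prob : MeasureTheory.IsProbabilityMeasure P
  ξ : ℤ × ℤ → Ω → ℤ
  vals : ∀ z ω, Even (z.1 + z.2) → ξ z ω = 1 ∨ ξ z ω = -1
  meas : ∀ z, Measurable (ξ z)
  indep : ProbabilityTheory.iIndepFun
    (fun (z : {z : ℤ × ℤ // Even (z.1 + z.2)}) ω => ξ z.1 ω) P
  marginal : ∀ z, Even (z.1 + z.2) → P {ω | ξ z ω = 1} = ENNReal.ofReal p

/-- The deterministic walk from the origin reading off an arrow configuration `c`. -/
def walkOf (c : ℤ × ℤ → ℤ) : ℕ → ℤ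
  | 0 => 0
  | n + 1 => walkOf c n + c (walkOf c n, (n : ℤ))

def StaticModel.walk {Ω : Type} [MeasurableSpace Ω] {p : ℝ} (SM : StaticModel Ω p)
    (ω : Ω) : ℕ → ℤ := walkOf fun z => SM.ξ z ω

/-- A simple random walk with probability `p` for a `+1` increment. -/
structure RWp (Ω : Type) [MeasurableSpace Ω] (p : ℝ) where
  P : MeasureTheory.Measure Ω
  prob : MeasureTheory.IsProbabilityMeasure P
  X : ℕ → Ω → ℤ
  vals : ∀ n ω, X n ω = 1 ∨ X n ω = -1
  meas : ∀ n, Measurable (X n)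
  indep : ProbabilityTheory.iIndepFun X P
  marginal : ∀ n, P {ω | X n ω = 1} = ENNReal.ofReal p

def RWp.S {Ω : Type} [MeasurableSpace Ω] {p : ℝ} (R : RWp Ω p) (n : ℕ) (ω : Ω) : ℤ :=
  ∑ i ∈ Finset.range n, R.X i ω

/-- A standard one-dimensional Brownian motion started at `0`. -/
structure BM (Ω : Type) [MeasurableSpace Ω] where
  P : MeasureTheory.Measure Ω
  prob : MeasureTheory.IsProbabilityMeasure P
  B : ℝ → Ω → ℝ
  meas : ∀ t, Measurable (B t)
  start : ∀ ω, B 0 ω = 0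
  cont : ∀ ω, Continuous fun t => B t ω
  incr : ∀ s t : ℝ, 0 ≤ s → s ≤ t →
    MeasureTheory.Measure.map (fun ω => B t ω - B s ω) P =
      ProbabilityTheory.gaussianReal 0 ((t - s).toNNReal)
  indepIncr : ∀ (n : ℕ) (t : Fin (n + 1) → ℝ), 0 ≤ t 0 → StrictMono t →
    ProbabilityTheory.iIndepFun
      (fun (i : Fin n) ω => B (t i.succ) ω - B (t i.castSucc) ω) P

/-- `K(γ) = (γ−2)√((γ+1)/(γ−1))`. -/
def Kfun (γ : ℝ) : ℝ := (γ - 2) * Real.sqrt ((γ + 1) / (γ - 1))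

/-- `γ(K)`, the solution in `(2,∞)` of `K(γ) = K` (as a supremum, which coincides
with the unique solution for `K > 0`). -/
def gammaOf (K : ℝ) : ℝ := sSup {g : ℝ | 2 < g ∧ Kfun g ≤ K}

/-- `d_k = 2(⌊γ^k/2⌋+1)`. -/
def dseq (γ : ℝ) (k : ℕ) : ℤ := 2 * (⌊γ ^ k / 2⌋ + 1)

/-- `t_n = d_0² + ⋯ + d_{n−1}²`. -/
def tseq (γ : ℝ) (n : ℕ) : ℤ := ∑ k ∈ Finset.range n, dseq γ k ^ 2

/-- `x_n = d_0 + ⋯ + d_{n−1}`. -/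
def xseq (γ : ℝ) (n : ℕ) : ℤ := ∑ k ∈ Finset.range n, dseq γ k

/-- The right-continuous step function `∂^γ`, equal to `x_n − d_n` on `[t_n, t_{n+1})`. -/
def boundary (γ : ℝ) (t : ℝ) : ℝ :=
  ((xseq γ (sSup {n : ℕ | ((tseq γ n : ℝ)) ≤ t}) : ℝ)) -
    ((dseq γ (sSup {n : ℕ | ((tseq γ n : ℝ)) ≤ t}) : ℝ))

variable {Ω : Type} [MeasurableSpace Ω]

/-- The event `A_k^τ`: the walk of the dynamical web at dynamical time `τ` started from
`z̄_k = (x_k, t_k)` stays strictly to the right of `x_k − d_k` on `[t_k, t_{k+1}]` and is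
strictly to the right of `x_{k+1}` at time `t_{k+1}`. -/
def Aevent (M : Model Ω) (γ : ℝ) (k : ℕ) (τ : ℝ) : Set Ω :=
  {ω | (∀ t ∈ Set.Icc ((tseq γ k : ℝ)) ((tseq γ (k + 1) : ℝ)),
      M.path ω τ (xseq γ k) (tseq γ k) t > ((xseq γ k : ℝ) - (dseq γ k : ℝ))) ∧
    M.path ω τ (xseq γ k) (tseq γ k) ((tseq γ (k + 1) : ℝ)) > (xseq γ (k + 1) : ℝ)}

/-- `γ₀ = sup_{k,K} 1/P(A_k(K))`. -/
def gam0 (M : Model Ω) : ℝ :=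
  ⨆ k : ℕ, ⨆ K : {K : ℝ // 0 < K}, ((M.P (Aevent M (gammaOf K.1) k 0)).toReal)⁻¹

/-- `f(p,K)` from the first-passage asymptotics of Brownian motion below a square-root
boundary; the sum is over `n ≥ 1`. -/
def fseq (p K : ℝ) : ℝ :=
  Real.sin (Real.pi * p / 2) * Real.Gamma (1 + p / 2) / Real.pi *
    ∑' n : ℕ, (Real.sqrt 2 * K) ^ (n + 1) / ((n + 1).factorial : ℝ) *
      Real.Gamma ((((n : ℝ) + 1) - p) / 2)

/-- `p(K)`, the solution in `(0,1)` of `f(p,K) = 1` (as an infimum, which coincides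
with the unique solution). -/
def pOf (K : ℝ) : ℝ := sInf {p : ℝ | p ∈ Set.Ioo (0 : ℝ) 1 ∧ fseq p K = 1}

/-- A path is `K⁺`-subdiffusive iff `π(t) ≥ −j − K√t` for all `t > 0`, for some `j ≥ 0`. -/
def KSubdiffusive (K : ℝ) (π : ℝ → ℝ) : Prop :=
  ∃ j : ℝ, 0 ≤ j ∧ ∀ t : ℝ, 0 < t → π t ≥ -j - K * Real.sqrt t

/-- A path is subdiffusive iff for some finite `K > 0`, `liminf π(t)/√t ≥ −K` or
`limsup π(t)/√t ≤ K`. -/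
def Subdiffusive (π : ℝ → ℝ) : Prop :=
  ∃ K : ℝ, 0 < K ∧
    ((-(K : EReal) ≤ Filter.liminf (fun t : ℝ => ((π t / Real.sqrt t : ℝ) : EReal)) Filter.atTop) ∨
      Filter.limsup (fun t : ℝ => ((π t / Real.sqrt t : ℝ) : EReal)) Filter.atTop ≤ (K : EReal))

/-- The law of the iterated logarithm for a path. -/
def SatisfiesLIL (π : ℝ → ℝ) : Prop :=
  Filter.limsup
      (fun t : ℝ => ((π t / Real.sqrt (2 * t * Real.log (Real.log t)) : ℝ) : EReal))
      Filter.atTop = 1 ∧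
  Filter.liminf
      (fun t : ℝ => ((π t / Real.sqrt (2 * t * Real.log (Real.log t)) : ℝ) : EReal))
      Filter.atTop = -1

/-- Modulus of continuity on `[0,1]`. -/
def modulus (f : ℝ → ℝ) (ε : ℝ) : ℝ :=
  sSup {d : ℝ | ∃ s ∈ Set.Icc (0 : ℝ) 1, ∃ t ∈ Set.Icc (0 : ℝ) 1, |s - t| < ε ∧ d = |f t - f s|}

/-- `l(t) = #{i ≤ t : S_d(i) = S_d'(i)}`. -/
def coalCount (Sd Sd' : ℕ → Ω → ℤ) (ω : Ω) (t : ℕ) : ℕ :=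
  ((Finset.range (t + 1)).filter fun i => Sd i ω = Sd' i ω).card

/-- `F(t) = t + Σ_{k ≤ l(t)} ΔT_k`. -/
def clockSum (Sd Sd' : ℕ → Ω → ℤ) (ΔT : ℕ → Ω → ℕ) (ω : Ω) (t : ℕ) : ℕ :=
  t + ∑ k ∈ Finset.range (coalCount Sd Sd' ω t + 1), ΔT k ω

/-- The right-continuous inverse `C(u) = inf{t : F(t) > u}` (discrete time). -/
def rcInv (Sd Sd' : ℕ → Ω → ℤ) (ΔT : ℕ → Ω → ℕ) (ω : Ω) (u : ℕ) : ℕ :=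
  sInf {t : ℕ | u < clockSum Sd Sd' ΔT ω t}

/-- The right-continuous inverse `C(u) = inf{t : F(t) > u}` at a real argument. -/
def rcInvR (Sd Sd' : ℕ → Ω → ℤ) (ΔT : ℕ → Ω → ℕ) (ω : Ω) (u : ℝ) : ℕ :=
  sInf {t : ℕ | u < (clockSum Sd Sd' ΔT ω t : ℝ)}

/-- The `α`-energy of a measure on `[0,1]`. -/
def energy (α : ℝ) (σ : MeasureTheory.Measure ℝ) : ℝ≥0∞ :=
  ∫⁻ τ in Set.Icc (0 : ℝ) 1, ∫⁻ τ' in Set.Icc (0 : ℝ) 1,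
    (ENNReal.ofReal |τ - τ'|) ^ (-α) ∂σ ∂σ

lemma abs_sub_le_of_abs_succ_sub_le {f : ℕ → ℝ} (hf : ∀ n, |f (n + 1) - f n| ≤ 1)
    {j k : ℕ} (hjk : j ≤ k) : |f k - f j| ≤ k - j := by
  calc |f k - f j| = dist (f j) (f k) := by rw [Real.dist_eq, abs_sub_comm]
    _ ≤ ∑ i ∈ Finset.Ico j k, dist (f i) (f (i + 1)) := dist_le_Ico_sum_dist f hjk
    _ = ∑ i ∈ Finset.Ico j k, |f (i + 1) - f i| := by simp only [Real.dist_eq, abs_sub_comm]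
    _ ≤ ∑ _i ∈ Finset.Ico j k, (1 : ℝ) := Finset.sum_le_sum fun i _ => hf i
    _ = k - j := by simp [Nat.cast_sub hjk]

section Interpolation

variable (w : ℕ → ℤ)

lemma interp_natCast (n : ℕ) : interp w n = w n := by
  rw [interp, Nat.floor_natCast]
  ring

lemma interp_of_mem_Icc {n : ℕ} {t : ℝ} (ht : t ∈ Icc (n : ℝ) (n + 1)) :
    interp w t = w n + (t - n) * (w (n + 1) - w n) := by
  rcases ht.2.eq_or_lt with rfl | hlt
  · rw [← Nat.cast_succ, interp_natCast]
    push_cast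
    ring
  · have hfl : ⌊t⌋₊ = n := (Nat.floor_eq_iff (n.cast_nonneg.trans ht.1)).2 ⟨ht.1, hlt⟩
    simp only [interp, hfl]
    ring

variable {w}

lemma abs_interp_sub_le (hw : ∀ n, |(w (n + 1) : ℝ) - w n| ≤ 1) {a b : ℝ} (ha : 0 ≤ a)
    (hb : 0 ≤ b) : |interp w b - interp w a| ≤ |b - a| := by
  wlog hab : a ≤ b generalizing a b
  · rw [abs_sub_comm, abs_sub_comm b]
    exact this hb ha (le_of_not_ge hab)
  rw [abs_of_nonneg (sub_nonneg.2 hab)]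
  set j := ⌊a⌋₊
  set k := ⌊b⌋₊
  have ha' : a ∈ Icc (j : ℝ) (j + 1) := ⟨Nat.floor_le ha, (Nat.lt_floor_add_one a).le⟩
  have hb' : b ∈ Icc (k : ℝ) (k + 1) := ⟨Nat.floor_le hb, (Nat.lt_floor_add_one b).le⟩
  rw [interp_of_mem_Icc w ha', interp_of_mem_Icc w hb']
  rcases (show j ≤ k from Nat.floor_le_floor hab).eq_or_lt with hjk | hjk
  · rw [← hjk, show (w j : ℝ) + (b - j) * (w (j + 1) - w j) - (w j + (a - j) * (w (j + 1) - w j))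
        = (b - a) * (w (j + 1) - w j) by ring, abs_mul, abs_of_nonneg (sub_nonneg.2 hab)]
    exact mul_le_of_le_one_right (sub_nonneg.2 hab) (hw j)
  · have hmid := abs_sub_le_of_abs_succ_sub_le (f := fun n => (w n : ℝ)) hw (Nat.succ_le_of_lt hjk)
    have e : (w k : ℝ) + (b - k) * (w (k + 1) - w k) - (w j + (a - j) * (w (j + 1) - w j)) =
        (b - k) * (w (k + 1) - w k) + (w k - w (j + 1)) + (j + 1 - a) * (w (j + 1) - w j) := by
      ring
    rw [e]
    push_cast at hmid
    calc _ ≤ |(b - k) * (w (k + 1) - w k)| + |(w k : ℝ) - w (j + 1)|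
          + |(j + 1 - a) * (w (j + 1) - w j)| := abs_add_three _ _ _
      _ ≤ (b - k) * 1 + (k - (j + 1)) + (j + 1 - a) * 1 := by
          rw [abs_mul, abs_mul, abs_of_nonneg (sub_nonneg.2 hb'.1),
            abs_of_nonneg (by linarith [ha'.2] : (0 : ℝ) ≤ j + 1 - a)]
          gcongr
          exacts [sub_nonneg.2 hb'.1, hw k, by linarith [ha'.2], hw j]
      _ = b - a := by ring

end Interpolation

lemma abs_interp_sub_le_of_corners {w : ℕ → ℤ} {a b B : ℝ} (ha : 0 ≤ a) (hb : 0 ≤ b)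
    (H : ∀ j k : ℕ, (j = ⌊a⌋₊ ∨ j = ⌊a⌋₊ + 1) → (k = ⌊b⌋₊ ∨ k = ⌊b⌋₊ + 1) →
      |(w k : ℝ) - w j| ≤ B) :
    |interp w b - interp w a| ≤ B := by
  have h11 := abs_le.1 (H _ _ (.inl rfl) (.inl rfl))
  have h12 := abs_le.1 (H _ _ (.inr rfl) (.inl rfl))
  have h21 := abs_le.1 (H _ _ (.inl rfl) (.inr rfl))
  have h22 := abs_le.1 (H _ _ (.inr rfl) (.inr rfl))
  have ha₁ : 0 ≤ (⌊a⌋₊ : ℝ) + 1 - a := by linarith [Nat.lt_floor_add_one a]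
  have ha₂ : 0 ≤ a - ⌊a⌋₊ := by linarith [Nat.floor_le ha]
  have hb₁ : 0 ≤ (⌊b⌋₊ : ℝ) + 1 - b := by linarith [Nat.lt_floor_add_one b]
  have hb₂ : 0 ≤ b - ⌊b⌋₊ := by linarith [Nat.floor_le hb]
  -- `interp w b - interp w a` is a convex combination of the four corner differences
  rw [abs_le, interp, interp]
  constructor <;> nlinarith [mul_nonneg hb₁ ha₁, mul_nonneg hb₁ ha₂, mul_nonneg hb₂ ha₁,
    mul_nonneg hb₂ ha₂]

lemma modulus_rescale_le {f : ℝ → ℝ} {δ h B : ℝ} (hδ : 0 < δ) (hB : 0 ≤ B)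
    (hf : ∀ a ∈ Icc 0 (1 / δ ^ 2), ∀ b ∈ Icc 0 (1 / δ ^ 2), |b - a| < h / δ ^ 2 →
      |f b - f a| ≤ B) :
    modulus (rescale δ f) h ≤ δ * B := by
  have hδ2 : 0 < δ ^ 2 := by positivity
  have hmem : ∀ u ∈ Icc (0 : ℝ) 1, u / δ ^ 2 ∈ Icc 0 (1 / δ ^ 2) := fun u hu =>
    ⟨div_nonneg hu.1 hδ2.le, div_le_div_of_nonneg_right hu.2 hδ2.le⟩
  refine Real.sSup_le ?_ (by positivity)
  rintro _ ⟨s, hs, t, ht, hst, rfl⟩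
  simp only [rescale, ← mul_sub, abs_mul, abs_of_pos hδ]
  gcongr
  refine hf _ (hmem s hs) _ (hmem t ht) ?_
  rw [← sub_div, abs_div, abs_of_pos hδ2, abs_sub_comm]
  gcongr

lemma modulus_rescale_interp_le_div (w : ℕ → ℤ) (hw : ∀ n, |(w (n + 1) : ℝ) - w n| ≤ 1)
    {δ h : ℝ} (hδ : 0 < δ) (hh : 0 ≤ h) :
    modulus (rescale δ (interp w)) h ≤ h / δ := by
  have key := modulus_rescale_le (f := interp w) (B := h / δ ^ 2) hδ (by positivity)
    fun a ha b hb hab => (abs_interp_sub_le hw ha.1 hb.1).trans hab.le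
  calc _ ≤ δ * (h / δ ^ 2) := key
    _ = h / δ := by field_simp

lemma modulus_rescale_interp_le {w : ℕ → ℤ} {δ h B : ℝ} (hδ : 0 < δ) {N K : ℕ}
    (hN : 1 / δ ^ 2 < N) (hK : h / δ ^ 2 + 1 ≤ K)
    (hw : ∀ j k, j ≤ k → k ≤ N → k ≤ j + K → |(w k : ℝ) - w j| ≤ B) :
    modulus (rescale δ (interp w)) h ≤ δ * B := by
  have hB : 0 ≤ B := (abs_nonneg _).trans (hw 0 0 le_rfl (Nat.zero_le N) (Nat.zero_le _))
  refine modulus_rescale_le hδ hB fun a ha b hb hab => abs_interp_sub_le_of_corners ha.1 hb.1 ?_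
  have hcorner : ∀ u ∈ Icc (0 : ℝ) (1 / δ ^ 2), ∀ i : ℕ, (i = ⌊u⌋₊ ∨ i = ⌊u⌋₊ + 1) →
      i ≤ N ∧ u - 1 < i ∧ (i : ℝ) ≤ u + 1 := by
    intro u hu i hi
    have h₁ := Nat.floor_le hu.1
    have h₂ := Nat.lt_floor_add_one u
    have hfl : ⌊u⌋₊ < N := by exact_mod_cast h₁.trans_lt (hu.2.trans_lt hN)
    rcases hi with rfl | rfl <;> refine ⟨by omega, ?_, ?_⟩ <;> push_cast <;> linarith
  intro j k hj hk
  obtain ⟨hjN, hj₁, hj₂⟩ := hcorner a ha j hj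
  obtain ⟨hkN, hk₁, hk₂⟩ := hcorner b hb k hk
  have hab' := abs_lt.1 hab
  rcases le_total j k with hle | hle
  · exact hw j k hle hkN (Nat.lt_succ_iff.1 (by exact_mod_cast (by linarith : (k : ℝ) < j + K + 1)))
  · rw [abs_sub_comm]
    exact hw k j hle hjN (Nat.lt_succ_iff.1 (by exact_mod_cast (by linarith : (j : ℝ) < k + K + 1)))

section Chaining

def DyadicIncrementsLE (v b : ℕ → ℝ) (N P : ℕ) : Prop :=
  ∀ p ≤ P, ∀ i, (i + 1) * 2 ^ p ≤ N → |v ((i + 1) * 2 ^ p) - v (i * 2 ^ p)| ≤ b p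

variable {v b : ℕ → ℝ} {N P : ℕ}

lemma abs_sub_dyadic_step_le (hb : ∀ p, 0 ≤ b p)
    (hv : DyadicIncrementsLE v b N P)
    {p i i' : ℕ} (hp : p ≤ P) (hi : i ≤ i') (hi' : i' ≤ i + 1) (hN : i' * 2 ^ p ≤ N) :
    |v (i' * 2 ^ p) - v (i * 2 ^ p)| ≤ b p := by
  obtain rfl | rfl : i' = i ∨ i' = i + 1 := by omega
  · simpa using hb p
  · exact hv p hp i hN

lemma abs_sub_dyadic_floor_le (hb : ∀ p, 0 ≤ b p)
    (hv : DyadicIncrementsLE v b N P)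
    {p j : ℕ} (hp : p ≤ P) (hj : j ≤ N) :
    |v j - v (j / 2 ^ p * 2 ^ p)| ≤ ∑ p' ∈ Finset.range p, b p' := by
  induction p with
  | zero => simp
  | succ p ih =>
    have hstep : |v (j / 2 ^ p * 2 ^ p) - v (j / 2 ^ (p + 1) * 2 ^ (p + 1))| ≤ b p := by
      rw [show j / 2 ^ (p + 1) * 2 ^ (p + 1) = 2 * (j / 2 ^ p / 2) * 2 ^ p by
        rw [pow_succ, ← Nat.div_div_eq_div_mul]; ring]
      exact abs_sub_dyadic_step_le hb hv (by omega) (Nat.mul_div_le _ _) (by omega)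
        ((Nat.div_mul_le_self j _).trans hj)
    rw [Finset.sum_range_succ]
    exact (abs_sub_le _ _ _).trans (add_le_add (ih (by omega)) hstep)

lemma abs_sub_le_of_dyadic (hb : ∀ p, 0 ≤ b p)
    (hv : DyadicIncrementsLE v b N P)
    {j k : ℕ} (hjk : j ≤ k) (hkN : k ≤ N) (hkj : k ≤ j + 2 ^ P) :
    |v k - v j| ≤ 2 * ∑ p ∈ Finset.range (P + 1), b p := by
  have htop : |v (k / 2 ^ P * 2 ^ P) - v (j / 2 ^ P * 2 ^ P)| ≤ b P := by
    refine abs_sub_dyadic_step_le hb hv le_rfl (Nat.div_le_div_right hjk) ?_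
      ((Nat.div_mul_le_self k _).trans hkN)
    calc k / 2 ^ P ≤ (j + 2 ^ P) / 2 ^ P := Nat.div_le_div_right hkj
      _ = j / 2 ^ P + 1 := Nat.add_div_right _ (by positivity)
  have hk := abs_sub_dyadic_floor_le hb hv le_rfl hkN
  have hj := abs_sub_dyadic_floor_le hb hv le_rfl (hjk.trans hkN)
  rw [abs_sub_comm] at hj
  have := abs_sub_le (v k) (v (k / 2 ^ P * 2 ^ P)) (v j)
  have := abs_sub_le (v (k / 2 ^ P * 2 ^ P)) (v (j / 2 ^ P * 2 ^ P)) (v j)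
  rw [Finset.sum_range_succ]
  linarith [hb P]

end Chaining

lemma exp_neg_le_factorial_div_pow {y : ℝ} (hy : 0 < y) (q : ℕ) :
    Real.exp (-y) ≤ q.factorial / y ^ q := by
  rw [Real.exp_neg, inv_le_comm₀ (Real.exp_pos y) (by positivity), inv_div]
  exact Real.pow_div_factorial_le_exp y hy.le q

lemma sum_range_pow_sub_le {ρ : ℝ} (h₀ : 0 ≤ ρ) (h₁ : ρ < 1) (P : ℕ) :
    ∑ p ∈ Finset.range (P + 1), ρ ^ (P - p) ≤ 1 / (1 - ρ) := by
  have h := Finset.sum_range_reflect (fun u => ρ ^ u) (P + 1)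
  simp only [add_tsub_cancel_right] at h
  rw [h, Finset.range_eq_Ico, one_div]
  simpa using geom_sum_Ico_le_of_lt_one (m := 0) (n := P + 1) h₀ h₁

lemma sum_dyadic_level_le (N P q : ℕ) {C x θ : ℝ} (hC : 0 ≤ C) (hx : 0 < x) (hθ : 0 < θ)
    (hqθ : 2 ≤ 2 ^ q * θ ^ (2 * (q + 1))) :
    ∑ p ∈ Finset.range (P + 1), ((N / 2 ^ p : ℕ) : ℝ) *
        (C * (2 ^ p) ^ (q + 1) / (x * θ ^ (P - p)) ^ (2 * (q + 1))) ≤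
      2 * (C * N * 2 ^ (P * q) / x ^ (2 * (q + 1))) := by
  set ρ : ℝ := 1 / (2 ^ q * θ ^ (2 * (q + 1)))
  have hρ : ρ ≤ 1 / 2 := one_div_le_one_div_of_le two_pos hqθ
  set K := C * N * 2 ^ (P * q) / x ^ (2 * (q + 1))
  have hterm : ∀ p ∈ Finset.range (P + 1), ((N / 2 ^ p : ℕ) : ℝ) *
      (C * (2 ^ p) ^ (q + 1) / (x * θ ^ (P - p)) ^ (2 * (q + 1))) ≤ K * ρ ^ (P - p) := by
    intro p hp
    obtain ⟨u, rfl⟩ : ∃ u, P = p + u := ⟨P - p, by simp at hp; omega⟩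
    calc _ ≤ (N / 2 ^ p : ℝ) *
          (C * (2 ^ p) ^ (q + 1) / (x * θ ^ (p + u - p)) ^ (2 * (q + 1))) := by
          gcongr
          exact_mod_cast Nat.cast_div_le
      _ = K * ρ ^ (p + u - p) := by
          simp only [K, ρ, add_tsub_cancel_left, one_div, inv_pow]
          field_simp
          ring
  calc _ ≤ ∑ p ∈ Finset.range (P + 1), K * ρ ^ (P - p) := Finset.sum_le_sum hterm
    _ ≤ K * (1 / (1 - ρ)) := by
        rw [← Finset.mul_sum]; gcongr; exact sum_range_pow_sub_le (by positivity) (by linarith) P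
    _ ≤ K * 2 := by gcongr; rw [div_le_iff₀ (by linarith)]; linarith
    _ = 2 * K := mul_comm _ _

lemma exists_nat_ge_and_le_mul (n₀ : ℕ) (x : ℝ) {y : ℝ} (hy : 0 < y) :
    ∃ n : ℕ, n₀ ≤ n ∧ x ≤ n * y := by
  refine ⟨max n₀ ⌈x / y⌉₊, le_max_left _ _, ?_⟩
  calc x = x / y * y := by field_simp
    _ ≤ _ := by
      gcongr
      exact (Nat.le_ceil _).trans (by exact_mod_cast le_max_right _ _)

lemma rpow_pow_div_rpow_pow_le {Δ a b r : ℝ} (hΔ : 0 < Δ) (hΔ₁ : Δ ≤ 1) {m n : ℕ}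
    (h : r ≤ m * a - n * b) : (Δ ^ a) ^ m / (Δ ^ b) ^ n ≤ Δ ^ r := by
  rw [← Real.rpow_natCast, ← Real.rpow_natCast, ← Real.rpow_mul hΔ.le, ← Real.rpow_mul hΔ.le,
    ← Real.rpow_sub hΔ]
  exact Real.rpow_le_rpow_of_exponent_ge hΔ hΔ₁ (by linarith)

lemma sq_le_four_mul_rpow_of_le {Δ δ α β : ℝ} (hΔ : 0 < Δ) (hΔ₁ : Δ ≤ 1) (hαβ : 2 * α ≤ β)
    (hδ : 0 ≤ δ) (hδΔ : δ ≤ 2 * Δ ^ (β - α)) : δ ^ 2 ≤ 4 * Δ ^ β := by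
  have h₁ : (Δ ^ (β - α)) ^ 2 = Δ ^ β * Δ ^ (β - 2 * α) := by
    rw [sq, ← Real.rpow_add hΔ, ← Real.rpow_add hΔ]; ring_nf
  have h₂ : Δ ^ (β - 2 * α) ≤ 1 := Real.rpow_le_one hΔ.le hΔ₁ (by linarith)
  have h₃ : δ ^ 2 ≤ (2 * Δ ^ (β - α)) ^ 2 := by gcongr
  nlinarith [Real.rpow_pos_of_pos hΔ β]

namespace RW

variable (R : RW Ω)

instance : IsProbabilityMeasure R.P := R.prob

lemma measurable_X_real (n : ℕ) : Measurable fun ω => (R.X n ω : ℝ) :=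
  measurable_from_top.comp (R.meas n)

lemma S_add_sub_S (i n : ℕ) (ω : Ω) :
    (R.S (i + n) ω : ℝ) - R.S i ω = ∑ k ∈ Finset.Ico i (i + n), (R.X k ω : ℝ) := by
  simp only [RW.S, Int.cast_sum]
  rw [Finset.sum_Ico_eq_sub _ (Nat.le_add_right i n)]

lemma abs_S_succ_sub_S (ω : Ω) (n : ℕ) : |(R.S (n + 1) ω : ℝ) - R.S n ω| ≤ 1 := by
  rw [R.S_add_sub_S n 1, Nat.Ico_succ_singleton, Finset.sum_singleton]
  rcases R.vals n ω with h | h <;> simp [h]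

lemma integral_X (n : ℕ) : ∫ ω, (R.X n ω : ℝ) ∂(R.P) = 0 := by
  have hm : MeasurableSet {ω | R.X n ω = 1} := R.meas n (measurableSet_singleton 1)
  have hX : (fun ω => (R.X n ω : ℝ)) = fun ω => 2 * {ω | R.X n ω = 1}.indicator 1 ω - 1 := by
    ext ω
    rcases R.vals n ω with h | h <;> norm_num [h, Set.indicator]
  have hi : Integrable ({ω | R.X n ω = 1}.indicator (1 : Ω → ℝ)) R.P :=
    (integrable_const (1 : ℝ)).indicator hm
  rw [hX, integral_sub (hi.const_mul 2) (integrable_const 1), integral_const_mul,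
    integral_indicator_one hm, measureReal_def, R.fair]
  norm_num

lemma hasSubgaussianMGF_X (n : ℕ) : HasSubgaussianMGF (fun ω => (R.X n ω : ℝ)) 1 R.P := by
  have h := hasSubgaussianMGF_of_mem_Icc_of_integral_eq_zero (a := -1) (b := 1)
    (R.measurable_X_real n).aemeasurable
    (ae_of_all _ fun ω => by rcases R.vals n ω with h | h <;> simp [h]) (R.integral_X n)
  convert h
  norm_num

lemma measureReal_le_abs_S_sub_le (i n : ℕ) {x : ℝ} (hx : 0 ≤ x) :
    R.P.real {ω | x ≤ |(R.S (i + n) ω : ℝ) - R.S i ω|} ≤ 2 * Real.exp (-x ^ 2 / (2 * n)) := by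
  have hindep : iIndepFun (fun k ω => (R.X k ω : ℝ)) R.P :=
    R.indep.comp (fun _ => Int.cast) fun _ => measurable_from_top
  have hindep' : iIndepFun (fun k ω => -(R.X k ω : ℝ)) R.P :=
    R.indep.comp (fun _ z => -(z : ℝ)) fun _ => measurable_from_top
  have hup := HasSubgaussianMGF.measure_sum_ge_le_of_iIndepFun hindep (c := fun _ => 1)
    (s := Finset.Ico i (i + n)) (fun k _ => R.hasSubgaussianMGF_X k) hx
  have hdown := HasSubgaussianMGF.measure_sum_ge_le_of_iIndepFun hindep' (c := fun _ => 1)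
    (s := Finset.Ico i (i + n)) (fun k _ => (R.hasSubgaussianMGF_X k).neg) hx
  simp only [Finset.sum_const, Nat.card_Ico, add_tsub_cancel_left, nsmul_eq_mul, mul_one,
    NNReal.coe_natCast, Finset.sum_neg_distrib] at hup hdown
  calc _ ≤ R.P.real ({ω | x ≤ ∑ k ∈ Finset.Ico i (i + n), (R.X k ω : ℝ)} ∪
        {ω | x ≤ -∑ k ∈ Finset.Ico i (i + n), (R.X k ω : ℝ)}) := by
        refine measureReal_mono fun ω (hω : x ≤ _) => ?_
        rw [R.S_add_sub_S] at hω
        exact le_abs.1 hω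
    _ ≤ _ := (measureReal_union_le _ _).trans (by linarith)

lemma measureReal_le_abs_S_sub_le_pow (i q : ℕ) {n : ℕ} (hn : 0 < n) {x : ℝ} (hx : 0 < x) :
    R.P.real {ω | x ≤ |(R.S (i + n) ω : ℝ) - R.S i ω|} ≤
      2 * q.factorial * 2 ^ q * n ^ q / x ^ (2 * q) := by
  refine (R.measureReal_le_abs_S_sub_le i n hx.le).trans ?_
  have h := exp_neg_le_factorial_div_pow (y := x ^ 2 / (2 * n)) (by positivity) q
  rw [neg_div]
  calc _ ≤ 2 * (q.factorial / (x ^ 2 / (2 * n)) ^ q) := by gcongr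
    _ = _ := by rw [div_pow, pow_mul, mul_pow]; field_simp

lemma measureReal_dyadic_increment_le (N P q : ℕ) {b : ℕ → ℝ} (hb : ∀ p, 0 < b p) :
    R.P.real (⋃ p ∈ Finset.range (P + 1), ⋃ i ∈ Finset.range (N / 2 ^ p),
        {ω | b p ≤ |(R.S ((i + 1) * 2 ^ p) ω : ℝ) - R.S (i * 2 ^ p) ω|}) ≤
      ∑ p ∈ Finset.range (P + 1), ((N / 2 ^ p : ℕ) : ℝ) *
        (2 * q.factorial * 2 ^ q * (2 ^ p) ^ q / b p ^ (2 * q)) := by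
  refine (measureReal_biUnion_finset_le _ _).trans ?_
  gcongr with p
  refine (measureReal_biUnion_finset_le _ _).trans ?_
  calc _ ≤ ∑ _i ∈ Finset.range (N / 2 ^ p),
        2 * q.factorial * 2 ^ q * (2 ^ p : ℝ) ^ q / b p ^ (2 * q) := by
        gcongr with i
        have h := R.measureReal_le_abs_S_sub_le_pow (i * 2 ^ p) q (n := 2 ^ p) (by positivity)
          (hb p)
        rwa [← add_one_mul, Nat.cast_pow, Nat.cast_ofNat] at h
    _ = _ := by rw [Finset.sum_const, Finset.card_range, nsmul_eq_mul]

lemma measureReal_modulus_ge_eq_zero {δ h ε : ℝ} (hδ : 0 < δ) (hh : 0 ≤ h) (hε : h / δ < ε) :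
    R.P.real {ω | ε ≤ modulus (rescale δ (R.path ω)) h} = 0 := by
  have hmod (ω : Ω) : modulus (rescale δ (R.path ω)) h ≤ h / δ :=
    modulus_rescale_interp_le_div (fun n => R.S n ω) (R.abs_S_succ_sub_S ω) hδ hh
  have hempty : {ω | ε ≤ modulus (rescale δ (R.path ω)) h} = ∅ :=
    Set.eq_empty_of_forall_notMem fun ω hω => (le_trans hω (hmod ω)).not_gt hε
  rw [hempty, measureReal_empty]

lemma measureReal_modulus_gt_le {q : ℕ} (hq : 12 ≤ q) {δ h A : ℝ} (hδ : δ ∈ Ioc 0 1)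
    (hh : δ ^ 2 ≤ 4 * h) (hA : 0 < A) :
    R.P.real {ω | 8 * A < modulus (rescale δ (R.path ω)) h} ≤
      16 * (q + 1).factorial * 20 ^ q * h ^ q / A ^ (2 * (q + 1)) := by
  obtain ⟨hδ₀, hδ₁⟩ := hδ
  have hδ₂ : 0 < δ ^ 2 := by positivity
  have hm : 1 / 4 ≤ h / δ ^ 2 := by rw [le_div_iff₀ hδ₂]; linarith
  set N := ⌊1 / δ ^ 2⌋₊ + 1
  set P := Nat.log 2 (⌊h / δ ^ 2⌋₊ + 1) + 1
  set x := A / δ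
  set b : ℕ → ℝ := fun p => x * (3 / 4) ^ (P - p)
  have hx : 0 < x := by positivity
  have hb : ∀ p, 0 < b p := fun p => by positivity
  have hN : 1 / δ ^ 2 < N := by
    simp only [N, Nat.cast_add, Nat.cast_one]
    exact Nat.lt_floor_add_one _
  have hN' : (N : ℝ) ≤ 2 / δ ^ 2 := by
    have : 1 ≤ 1 / δ ^ 2 := by rw [le_div_iff₀ hδ₂]; nlinarith
    simp only [N, Nat.cast_add, Nat.cast_one]
    linarith [Nat.floor_le (zero_le_one.trans this), show 2 / δ ^ 2 = 1 / δ ^ 2 + 1 / δ ^ 2 by ring]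
  have hlog := Nat.lt_pow_succ_log_self one_lt_two (⌊h / δ ^ 2⌋₊ + 1)
  have hlog' := Nat.pow_log_le_self 2 (x := ⌊h / δ ^ 2⌋₊ + 1) (by omega)
  have hP : h / δ ^ 2 + 1 ≤ ((2 ^ P : ℕ) : ℝ) := by
    have h₁ : ((⌊h / δ ^ 2⌋₊ + 2 : ℕ) : ℝ) ≤ ((2 ^ P : ℕ) : ℝ) := by exact_mod_cast hlog
    push_cast at h₁ ⊢
    linarith [Nat.lt_floor_add_one (h / δ ^ 2)]
  have hP' : (2 : ℝ) ^ P ≤ 10 * (h / δ ^ 2) := by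
    have : 2 ^ P ≤ 2 * (⌊h / δ ^ 2⌋₊ + 1) := by rw [pow_succ']; omega
    have h₁ : ((2 ^ P : ℕ) : ℝ) ≤ 2 * (⌊h / δ ^ 2⌋₊ + 1) := by exact_mod_cast this
    push_cast at h₁
    linarith [Nat.floor_le (by positivity : 0 ≤ h / δ ^ 2)]
  have hθ : (2 : ℝ) ≤ 2 ^ q * (3 / 4) ^ (2 * (q + 1)) := by
    rw [pow_mul, pow_succ, ← mul_assoc, ← mul_pow]
    calc (2 : ℝ) ≤ (2 * (3 / 4) ^ 2) ^ 12 * (3 / 4) ^ 2 := by norm_num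
      _ ≤ _ := by gcongr; norm_num
  have hsub : {ω | 8 * A < modulus (rescale δ (R.path ω)) h} ⊆
      ⋃ p ∈ Finset.range (P + 1), ⋃ i ∈ Finset.range (N / 2 ^ p),
        {ω | b p ≤ |(R.S ((i + 1) * 2 ^ p) ω : ℝ) - R.S (i * 2 ^ p) ω|} := by
    intro ω (hω : 8 * A < _)
    by_contra hgood
    simp only [Set.mem_iUnion, Finset.mem_range, not_exists, Set.mem_ofPred_eq, not_le]
      at hgood
    have hinc : DyadicIncrementsLE (fun n => (R.S n ω : ℝ)) b N P := fun p hp i hi =>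
      (hgood p (by omega) i ((Nat.le_div_iff_mul_le (by positivity)).2 hi)).le
    have hsum : ∑ p ∈ Finset.range (P + 1), b p ≤ 4 * x := by
      rw [← Finset.mul_sum, mul_comm]
      gcongr
      exact (sum_range_pow_sub_le (by norm_num) (by norm_num) P).trans_eq (by norm_num)
    have hmod := modulus_rescale_interp_le (w := fun n => R.S n ω) hδ₀ hN hP
      fun _ _ hjk hkN hkj => abs_sub_le_of_dyadic (fun p => (hb p).le) hinc hjk hkN hkj
    have : δ * (2 * ∑ p ∈ Finset.range (P + 1), b p) ≤ 8 * A := by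
      calc _ ≤ δ * (2 * (4 * x)) := by gcongr
        _ = 8 * A := by simp only [x]; field_simp; ring
    exact hω.not_ge (hmod.trans this)
  calc _ ≤ _ := measureReal_mono hsub (measure_ne_top _ _)
    _ ≤ _ := R.measureReal_dyadic_increment_le N P (q + 1) hb
    _ ≤ 2 * (2 * (q + 1).factorial * 2 ^ (q + 1) * N * 2 ^ (P * q) / x ^ (2 * (q + 1))) :=
        sum_dyadic_level_le N P q (by positivity) hx (by norm_num) hθ
    _ ≤ 2 * (2 * (q + 1).factorial * 2 ^ (q + 1) * (2 / δ ^ 2) * (10 * (h / δ ^ 2)) ^ q /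
          x ^ (2 * (q + 1))) := by
        rw [pow_mul]
        gcongr
    _ = _ := by
        rw [div_pow A, show δ ^ (2 * (q + 1)) = (δ ^ 2) ^ q * δ ^ 2 by ring, mul_pow 10, div_pow h,
          show (20 : ℝ) ^ q = 2 ^ q * 10 ^ q by rw [← mul_pow]; norm_num]
        field_simp
        ring

end RW
theorem exceptional_times_thm7_general (R : RW Ω) (α β : ℝ)
    (hαβ : α < β / 2) (r : ℝ) (hr : 0 ≤ r) :
    ∃ c : ℝ, 0 < c ∧ ∀ δ : ℝ, δ ∈ Set.Ioc (0 : ℝ) 1 → ∀ Δ : ℝ, 0 < Δ →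
      (R.P {ω | Δ ^ α / 2 ≤ modulus (rescale δ (R.path ω)) (Δ ^ β)}).toReal ≤
        c * Δ ^ r := by
  obtain ⟨q, hq, hqr⟩ := exists_nat_ge_and_le_mul 12 (r + 2 * α) (by linarith : 0 < β - 2 * α)
  set K : ℝ := 16 * (q + 1).factorial * 20 ^ q * 32 ^ (2 * (q + 1))
  refine ⟨K + 1, by positivity, fun δ hδ Δ hΔ => ?_⟩
  rw [← measureReal_def]
  have hΔα := Real.rpow_pos_of_pos hΔ α
  rcases le_or_gt 1 Δ with hΔ₁ | hΔ₁
  · exact measureReal_le_one.trans <| (Real.one_le_rpow hΔ₁ hr).trans <|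
      le_mul_of_one_le_left (by positivity) (by linarith [show 0 ≤ K by positivity])
  have hsplit : Δ ^ β = Δ ^ (β - α) * Δ ^ α := by rw [← Real.rpow_add hΔ]; ring_nf
  rcases lt_or_ge (2 * Δ ^ (β - α)) δ with hδΔ | hδΔ
  · rw [R.measureReal_modulus_ge_eq_zero hδ.1 (Real.rpow_nonneg hΔ.le β)
      (by rw [div_lt_div_iff₀ hδ.1 two_pos, hsplit]; nlinarith)]
    positivity
  have hδh := sq_le_four_mul_rpow_of_le hΔ hΔ₁.le (by linarith) hδ.1.le hδΔ
  calc _ ≤ R.P.real {ω | 8 * (Δ ^ α / 32) < modulus (rescale δ (R.path ω)) (Δ ^ β)} :=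
        measureReal_mono (Set.ofPred_subset_ofPred.2 fun _ hω => by linarith) (measure_ne_top _ _)
    _ ≤ 16 * (q + 1).factorial * 20 ^ q * (Δ ^ β) ^ q / (Δ ^ α / 32) ^ (2 * (q + 1)) :=
        R.measureReal_modulus_gt_le hq hδ hδh (by positivity)
    _ = K * ((Δ ^ β) ^ q / (Δ ^ α) ^ (2 * (q + 1))) := by simp only [K, div_pow]; field_simp
    _ ≤ (K + 1) * Δ ^ r := by
        gcongr
        · linarith
        · exact rpow_pow_div_rpow_pow_le hΔ hΔ₁.le (by push_cast; linarith)

/-- **Modulus-of-continuity estimate.** For `α, β ∈ (0,∞)` with `β/2 > α` and any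
`r ≥ 0` there is `c ∈ (0,∞)`, independent of `Δ` and `δ`, such that
`P(ω_{S̃}(Δ^β) ≥ Δ^α/2) ≤ c·Δ^r` for a simple symmetric random walk `S`. -/
theorem exceptional_times_thm7 (R : RW Ω) (α β : ℝ) (hα : 0 < α) (hβ : 0 < β)
    (hαβ : α < β / 2) (r : ℝ) (hr : 0 ≤ r) :
    ∃ c : ℝ, 0 < c ∧ ∀ δ : ℝ, δ ∈ Set.Ioc (0 : ℝ) 1 → ∀ Δ : ℝ, 0 < Δ →
      (R.P {ω | Δ ^ α / 2 ≤ modulus (rescale δ (R.path ω)) (Δ ^ β)}).toReal ≤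
        c * Δ ^ r :=
  exceptional_times_thm7_general R α β hαβ r hr

end DyDWPaper
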